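/- Let A = ℂQ/⟨R⟩ be a connected acyclic bound quiver algebra, W a faithful A-module, and V an A-module with minimal projective resolution ⋯ → P_2 →^g P_1 →^f P_0 → V → 0. If the induced linear map Hom_A(P_0, W) → Hom_A(P_1, W), φ ↦ φ∘f, is an isomorphism of vector spaces, then the projective dimension of V over A is at most 1. -/

import Mathlib

open Matrix
noncomputable section

/-- A (finite-vertex) quiver: vertices, arrows, tail and head maps. -/
structure Quiv where
  V : Type
  A : Type
  t : A → V
  h : A → V
  [fV : Fintype V]
  [dV : DecidableEq V]

attribute [instance] Quiv.fV Quiv.dV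

/-- The `Quiver` structure on the vertices of `Q`: an arrow from `x` to `y` is an
arrow of `Q` with tail `x` and head `y`.  This gives us `Quiver.Path x y`, the type of
oriented paths from `x` to `y` in `Q`. -/
instance quivToQuiver (Q : Quiv) : Quiver Q.V := ⟨fun x y => {a : Q.A // Q.t a = x ∧ Q.h a = y}⟩

/-- The space of matrix representations of `Q` of dimension vector `β`, with entries in a
commutative ring `R`. -/
def RepR (Q : Quiv) (R : Type) (β : Q.V → ℕ) := ∀ a : Q.A, Matrix (Fin (β (Q.h a))) (Fin (β (Q.t a))) R

/-- The representation space `rep(Q,β) = ∏_{a ∈ Q₁} ℂ^{β(ha) × β(ta)}`. -/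
abbrev QRep (Q : Quiv) (β : Q.V → ℕ) := RepR Q ℂ β

/-- Transport of a rectangular matrix along equalities of its sizes. -/
def castM {R : Type} {m n m' n' : ℕ} (hm : m = m') (hn : n = n')
    (M : Matrix (Fin m) (Fin n) R) : Matrix (Fin m') (Fin n') R :=
  M.submatrix (Fin.cast hm.symm) (Fin.cast hn.symm)

/-- The value `W(p)` of a representation `W` on an oriented path `p` (the product of the
matrices attached to the arrows of `p`; the trivial path gives the identity matrix). -/
def evalPath {Q : Quiv} {R : Type} [CommRing R] {β : Q.V → ℕ} (W : RepR Q R β) :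
    ∀ {x y : Q.V}, Quiver.Path x y → Matrix (Fin (β y)) (Fin (β x)) R
  | _, _, Quiver.Path.nil => 1
  | _, _, Quiver.Path.cons p e =>
      (castM (congrArg β e.2.2) (congrArg β e.2.1) (W e.1)) * evalPath W p
variable (Q : Quiv)

/-- A formal (finite) linear combination of parallel oriented paths in `Q`, together with its
endpoints: the element of the path algebra it represents lives in `e_y · ℂQ · e_x`. -/
def FormalRel := Σ (x : Q.V) (y : Q.V), (Quiver.Path x y →₀ ℂ)

variable {Q}

/-- Evaluation of a representation on a formal linear combination of parallel paths. -/
def evalLin {β : Q.V → ℕ} (W : QRep Q β) {x y : Q.V} (c : Quiver.Path x y →₀ ℂ) :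
    Matrix (Fin (β y)) (Fin (β x)) ℂ :=
  c.sum fun p k => k • evalPath W p

/-- Evaluation of a representation over `ℂ[x]` on a formal linear combination of paths. -/
def evalLinP {β : Q.V → ℕ} (W : RepR Q (Polynomial ℂ) β) {x y : Q.V}
    (c : Quiver.Path x y →₀ ℂ) : Matrix (Fin (β y)) (Fin (β x)) (Polynomial ℂ) :=
  c.sum fun p k => (Polynomial.C k) • evalPath W p

/-- The module variety `mod(A,β)` of the algebra `A = ℂQ/⟨S⟩`: all `β`-dimensional
representations of `Q` annihilating every relation in `S`. -/
def modSet (S : Set (FormalRel Q)) (β : Q.V → ℕ) : Set (QRep Q β) :=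
  {W | ∀ r ∈ S, evalLin W r.2.2 = 0}

/-- A set of relations is admissible if every path occurring in it has length at least two. -/
def AdmissibleRels (S : Set (FormalRel Q)) : Prop :=
  ∀ r ∈ S, ∀ p ∈ r.2.2.support, 2 ≤ p.length

/-- The base change group `GL(β) = ∏_x GL(β(x),ℂ)`. -/
abbrev GLb (β : Q.V → ℕ) := ∀ x : Q.V, Matrix.GeneralLinearGroup (Fin (β x)) ℂ

/-- The action of `GL(β)` on `rep(Q,β)` by simultaneous conjugation. -/
def gAct {β : Q.V → ℕ} (g : GLb β) (W : QRep Q β) : QRep Q β :=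
  fun a => ((g (Q.h a)).val) * W a * (((g (Q.t a))⁻¹).val)

/-- The character of `GL(β)` induced by the weight `σ`: `g ↦ ∏_x det(g(x))^{σ(x)}`.  -/
def chi {β : Q.V → ℕ} (σ : Q.V → ℤ) (g : GLb β) : ℂ :=
  ∏ x : Q.V, ((g x).val.det) ^ (σ x)

/-- Index type of the coordinates on `rep(Q,β)`. -/
def RepCoord (β : Q.V → ℕ) := Σ a : Q.A, Fin (β (Q.h a)) × Fin (β (Q.t a))

/-- The coordinates of a point of `rep(Q,β)`. -/
def repCoords {β : Q.V → ℕ} (W : QRep Q β) : RepCoord (Q := Q) β → ℂ :=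
  fun c => W c.1 c.2.1 c.2.2

/-- `F` is a polynomial function on `rep(Q,β)`. -/
def IsPolyFun {β : Q.V → ℕ} (F : QRep Q β → ℂ) : Prop :=
  ∃ P : MvPolynomial (RepCoord (Q := Q) β) ℂ, ∀ W, F W = MvPolynomial.eval (repCoords W) P

/-- `F` is a semi-invariant of weight `σ` on `rep(Q,β)`. -/
def IsSemiInvariant {β : Q.V → ℕ} (σ : Q.V → ℤ) (F : QRep Q β → ℂ) : Prop :=
  IsPolyFun F ∧ ∀ (g : GLb β) (W : QRep Q β), F (gAct g W) = chi σ g * F W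

/-- The orbit semigroup `S_Q(W)` of a representation `W ∈ rep(Q,β)`: all weights `σ` admitting
a semi-invariant of weight `σ` not vanishing at `W`. -/
def OrbitSemigroup {β : Q.V → ℕ} (W : QRep Q β) : Set (Q.V → ℤ) :=
  {σ | ∃ F : QRep Q β → ℂ, IsSemiInvariant σ F ∧ F W ≠ 0}

/-- `W` is `σ`-semi-stable: some positive multiple of `σ` lies in the orbit semigroup. -/
def SemiStable {β : Q.V → ℕ} (σ : Q.V → ℤ) (W : QRep Q β) : Prop :=
  ∃ n : ℕ, 1 ≤ n ∧ (fun x => (n : ℤ) * σ x) ∈ OrbitSemigroup W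

/-- The weight `σ` is `W`-saturated: if `nσ` lies in the orbit semigroup of `W` for some
integer `n ≥ 1`, then so does `σ`. -/
def WSaturated {β : Q.V → ℕ} (W : QRep Q β) (σ : Q.V → ℤ) : Prop :=
  (∃ n : ℕ, 1 ≤ n ∧ (fun x => (n : ℤ) * σ x) ∈ OrbitSemigroup W) → σ ∈ OrbitSemigroup W

/-- `Q` is connected: any two vertices are joined by an unoriented walk. -/
def QConnected (Q : Quiv) : Prop :=
  ∀ x y : Q.V, Relation.ReflTransGen
    (fun u v => ∃ a : Q.A, (Q.t a = u ∧ Q.h a = v) ∨ (Q.t a = v ∧ Q.h a = u)) x y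

/-- `Q` is acyclic: the only oriented path from a vertex to itself is the trivial one. -/
def QAcyclic (Q : Quiv) : Prop := ∀ (x : Q.V) (p : Quiver.Path x x), p = Quiver.Path.nil
section Capacity

variable (Q : Quiv) (β : Q.V → ℕ) (σ : Q.V → ℤ)

/-- Vertices where the weight `σ` is positive. -/
abbrev PosV := {x : Q.V // 0 < σ x}

/-- Vertices where the weight `σ` is negative. -/
abbrev NegV := {x : Q.V // σ x < 0}

/-- `σ₊` at a positive vertex. -/
abbrev posP (i : PosV Q σ) : ℕ := (σ i.1).toNat

/-- `σ₋` at a negative vertex. -/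
abbrev negP (j : NegV Q σ) : ℕ := (-σ j.1).toNat

/-- Row index type of the `N × N` block matrices: block rows are indexed by pairs `(j,q)`
with `q ∈ I_j⁻`, each of height `β(w_j)`; so `N = Σ_j σ₋(w_j)β(w_j)` rows in total. -/
abbrev RowT := Σ j : NegV Q σ, Fin (negP Q σ j) × Fin (β j.1)

/-- Column index type of the `N × N` block matrices: block columns indexed by pairs `(i,r)`
with `r ∈ I_i⁺`, each of width `β(v_i)`; so `N = Σ_i σ₊(v_i)β(v_i)` columns in total. -/
abbrev ColT := Σ i : PosV Q σ, Fin (posP Q σ i) × Fin (β i.1)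

/-- The index set `I_σ = {(i,j,p,q,r)}`. -/
structure BIdx where
  i : PosV Q σ
  j : NegV Q σ
  p : Quiver.Path i.1 j.1
  q : Fin (negP Q σ j)
  r : Fin (posP Q σ i)

variable {Q β σ}

/-- The block matrix `W^{i,j,p}_{q,r}`: its `(q,r)` block entry is `W(p)` and all other
entries vanish. -/
def blockMat (W : QRep Q β) (d : BIdx Q σ) : Matrix (RowT Q β σ) (ColT Q β σ) ℂ :=
  fun s u =>
    if hj : s.1 = d.j then
      if hi : u.1 = d.i then
        if Fin.cast (congrArg (negP Q σ) hj) s.2.1 = d.q ∧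
           Fin.cast (congrArg (posP Q σ) hi) u.2.1 = d.r then
          evalPath W d.p (Fin.cast (congrArg (fun z => β z.1) hj) s.2.2)
            (Fin.cast (congrArg (fun z => β z.1) hi) u.2.2)
        else 0
      else 0
    else 0

/-- The Brascamp–Lieb (completely positive) operator `T_{W,σ}` associated to the quiver
datum `(W,σ)`, with Kraus operators the block matrices `W^{i,j,p}_{q,r}`. -/
def BLop (W : QRep Q β) (X : Matrix (RowT Q β σ) (RowT Q β σ) ℂ) :
    Matrix (ColT Q β σ) (ColT Q β σ) ℂ :=
  ∑ᶠ d : BIdx Q σ, (blockMat W d)ᵀ * X * blockMat W d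

/-- The capacity `cap_Q(W,σ)` of the quiver datum `(W,σ)`: the infimum of
`Det (T_{W,σ}(X))` over real positive definite matrices `X` with `Det X = 1`. -/
def capQ (W : QRep Q β) : ℝ :=
  sInf {r : ℝ | ∃ X : Matrix (RowT Q β σ) (RowT Q β σ) ℝ, X.PosDef ∧ X.det = 1 ∧
    r = ((BLop (σ := σ) W (X.map Complex.ofReal)).det).re}

/-- `Span_ℂ(W^{i,j,p}_{q,r} : (i,j,p,q,r) ∈ I_σ)` contains a non-singular `N × N` matrix. -/
def SpanNonsingular (W : QRep Q β) (σ : Q.V → ℤ) : Prop :=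
  ∃ M ∈ Submodule.span ℂ (Set.range (blockMat (σ := σ) W)),
    Function.Bijective (Matrix.mulVecLin M)

end Capacity
section HomExt

variable {Q : Quiv}

/-- The space of morphisms of representations `Hom(V,W)`, as a subspace of
`∏_x Hom(V(x),W(x))` (in matrix form). -/
def HomS {α γ : Q.V → ℕ} (V : QRep Q α) (W : QRep Q γ) :
    Submodule ℂ (∀ x : Q.V, Matrix (Fin (γ x)) (Fin (α x)) ℂ) where
  carrier := {φ | ∀ a : Q.A, φ (Q.h a) * V a = W a * φ (Q.t a)}
  add_mem' := by
    intro φ ψ hφ hψ a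
    simp only [Pi.add_apply, Matrix.add_mul, Matrix.mul_add, hφ a, hψ a]
  zero_mem' := by intro a; simp
  smul_mem' := by
    intro c φ hφ a
    simp only [Pi.smul_apply, Matrix.smul_mul, Matrix.mul_smul, hφ a]

/-- `dim_ℂ Hom(V,W)`. -/
def dimHom {α γ : Q.V → ℕ} (V : QRep Q α) (W : QRep Q γ) : ℕ :=
  Module.finrank ℂ (HomS V W)

/-- A family of matrices is componentwise surjective (as linear maps). -/
def MorSurj {α γ : Q.V → ℕ} (φ : ∀ x : Q.V, Matrix (Fin (γ x)) (Fin (α x)) ℂ) : Prop :=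
  ∀ x, Function.Surjective (Matrix.mulVecLin (φ x))

/-- A family of matrices is componentwise injective (as linear maps). -/
def MorInj {α γ : Q.V → ℕ} (φ : ∀ x : Q.V, Matrix (Fin (γ x)) (Fin (α x)) ℂ) : Prop :=
  ∀ x, Function.Injective (Matrix.mulVecLin (φ x))

/-- Isomorphism of representations (possibly of different dimension vectors). -/
def RIso {α γ : Q.V → ℕ} (V : QRep Q α) (W : QRep Q γ) : Prop :=
  ∃ u : ∀ x : Q.V, ((Fin (α x) → ℂ) ≃ₗ[ℂ] (Fin (γ x) → ℂ)),
    ∀ a : Q.A, (u (Q.h a)).toLinearMap ∘ₗ (V a).mulVecLin =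
      (W a).mulVecLin ∘ₗ (u (Q.t a)).toLinearMap

/-- The space of `1`-cochains from `V` to `W`: families `φ(a) : V(ta) → W(ha)`. -/
abbrev C1sp (α γ : Q.V → ℕ) := ∀ a : Q.A, Matrix (Fin (γ (Q.h a))) (Fin (α (Q.t a))) ℂ

/-- The derivative (Leibniz rule) of a path with respect to a `1`-cochain `φ`:
`D_{a_s ⋯ a_1}(φ) = Σ_k W(a_s ⋯ a_{k+1}) φ(a_k) V(a_{k-1} ⋯ a_1)`. -/
def der {α γ : Q.V → ℕ} (V : QRep Q α) (W : QRep Q γ) (φ : C1sp (Q := Q) α γ) :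
    ∀ {x y : Q.V}, Quiver.Path x y → Matrix (Fin (γ y)) (Fin (α x)) ℂ
  | _, _, Quiver.Path.nil => 0
  | _, _, Quiver.Path.cons p e =>
      castM (congrArg γ e.2.2) (congrArg α e.2.1) (φ e.1) * evalPath V p
      + castM (congrArg γ e.2.2) (congrArg γ e.2.1) (W e.1) * der V W φ p

lemma der_add {α γ : Q.V → ℕ} (V : QRep Q α) (W : QRep Q γ) (φ ψ : C1sp (Q := Q) α γ)
    {x y : Q.V} (p : Quiver.Path x y) :
    der V W (φ + ψ) p = der V W φ p + der V W ψ p := by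
  induction p with
  | nil => simp [der]
  | cons p e ih =>
      simp only [der, ih, Pi.add_apply, castM, Matrix.submatrix_add, Matrix.add_mul,
        Matrix.mul_add]
      abel

lemma der_smul {α γ : Q.V → ℕ} (V : QRep Q α) (W : QRep Q γ) (c : ℂ) (φ : C1sp (Q := Q) α γ)
    {x y : Q.V} (p : Quiver.Path x y) :
    der V W (c • φ) p = c • der V W φ p := by
  induction p with
  | nil => simp [der]
  | cons p e ih =>
      simp only [der, ih, Pi.smul_apply, castM, Matrix.submatrix_smul, Matrix.smul_mul,
        Matrix.mul_smul, smul_add]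

lemma der_zero {α γ : Q.V → ℕ} (V : QRep Q α) (W : QRep Q γ)
    {x y : Q.V} (p : Quiver.Path x y) :
    der V W (0 : C1sp (Q := Q) α γ) p = 0 := by
  induction p with
  | nil => simp [der]
  | cons p e ih =>
      simp [der, ih, castM]

/-- The derivative of a formal linear combination of parallel paths. -/
def derRel {α γ : Q.V → ℕ} (V : QRep Q α) (W : QRep Q γ) (φ : C1sp (Q := Q) α γ)
    {x y : Q.V} (c : Quiver.Path x y →₀ ℂ) : Matrix (Fin (γ y)) (Fin (α x)) ℂ :=
  c.sum fun p k => k • der V W φ p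

/-- The space of `1`-cocycles relative to the set of relations `S`: cochains whose
derivative kills every relation in `S`. -/
def Z1 (S : Set (FormalRel Q)) {α γ : Q.V → ℕ} (V : QRep Q α) (W : QRep Q γ) :
    Submodule ℂ (C1sp (Q := Q) α γ) where
  carrier := {φ | ∀ r ∈ S, derRel V W φ r.2.2 = 0}
  add_mem' := by
    intro φ ψ hφ hψ r hr
    have : derRel V W (φ + ψ) r.2.2 = derRel V W φ r.2.2 + derRel V W ψ r.2.2 := by
      simp only [derRel, der_add, smul_add]
      exact Finsupp.sum_add
    rw [this, hφ r hr, hψ r hr, add_zero]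
  zero_mem' := by
    intro r hr
    simp [derRel, der_zero]
  smul_mem' := by
    intro c φ hφ r hr
    have : derRel V W (c • φ) r.2.2 = c • derRel V W φ r.2.2 := by
      simp only [derRel, der_smul, Finsupp.smul_sum, smul_comm c]
    rw [this, hφ r hr, smul_zero]

/-- The coboundary map `d⁰ : ∏_x Hom(V(x),W(x)) → C¹`,
`f ↦ (a ↦ f(ha) V(a) − W(a) f(ta))`. -/
def d0map {α γ : Q.V → ℕ} (V : QRep Q α) (W : QRep Q γ) :
    (∀ x : Q.V, Matrix (Fin (γ x)) (Fin (α x)) ℂ) →ₗ[ℂ] C1sp (Q := Q) α γ where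
  toFun f := fun a => f (Q.h a) * V a - W a * f (Q.t a)
  map_add' f g := by
    funext a
    simp only [Pi.add_apply, Matrix.add_mul, Matrix.mul_add]
    abel
  map_smul' c f := by
    funext a
    simp only [Pi.smul_apply, Matrix.smul_mul, Matrix.mul_smul, smul_sub, RingHom.id_apply]

/-- The space of `1`-coboundaries. -/
def B1 {α γ : Q.V → ℕ} (V : QRep Q α) (W : QRep Q γ) : Submodule ℂ (C1sp (Q := Q) α γ) :=
  LinearMap.range (d0map V W)

/-- `dim_ℂ Ext¹(V,W)` over the algebra `ℂQ/⟨S⟩`, computed as the dimension of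
`Z¹/B¹` (for modules, `B¹ ⊆ Z¹`, so this is `dim Z¹ − dim B¹`). -/
def dimExt1 (S : Set (FormalRel Q)) {α γ : Q.V → ℕ} (V : QRep Q α) (W : QRep Q γ) : ℕ :=
  Module.finrank ℂ (Z1 S V W) - Module.finrank ℂ ↥((B1 V W) ⊓ (Z1 S V W))

end HomExt
section ProjPdim

variable {Q : Quiv}

/-- `P` is a projective module over `ℂQ/⟨S⟩` (in matrix-representation form):
every morphism from `P` to the target of a surjection of modules lifts. -/
def IsProjRep (S : Set (FormalRel Q)) {γ : Q.V → ℕ} (P : QRep Q γ) : Prop :=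
  ∀ (δ ε : Q.V → ℕ) (M : QRep Q δ) (N : QRep Q ε), M ∈ modSet S δ → N ∈ modSet S ε →
    ∀ g ∈ HomS M N, MorSurj g → ∀ f ∈ HomS P N,
      ∃ h ∈ HomS P M, ∀ x, g x * h x = f x

/-- `V` has projective dimension at most one over `ℂQ/⟨S⟩`: there is a short exact
sequence `0 → P₁ → P₀ → V → 0` with `P₀, P₁` projective. -/
def PdimLE1 (S : Set (FormalRel Q)) {β : Q.V → ℕ} (V : QRep Q β) : Prop :=
  ∃ (γ₀ γ₁ : Q.V → ℕ) (P₀ : QRep Q γ₀) (P₁ : QRep Q γ₁),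
    P₀ ∈ modSet S γ₀ ∧ P₁ ∈ modSet S γ₁ ∧ IsProjRep S P₀ ∧ IsProjRep S P₁ ∧
    ∃ i ∈ HomS P₁ P₀, ∃ p ∈ HomS P₀ V, MorInj i ∧ MorSurj p ∧
      ∀ x, LinearMap.range (Matrix.mulVecLin (i x)) = LinearMap.ker (Matrix.mulVecLin (p x))

/-- The set `P_A(α) = {V ∈ mod(A,α) : pdim_A V ≤ 1}` where `A = ℂQ/⟨S⟩`. -/
def PAset (S : Set (FormalRel Q)) (α : Q.V → ℕ) : Set (QRep Q α) :=
  {V | V ∈ modSet S α ∧ PdimLE1 S V}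

end ProjPdim

section Zariski

/-- The Zariski topology on the affine space `ι → ℂ`: generated by the complements of
hypersurfaces. -/
def zarPi (ι : Type) : TopologicalSpace (ι → ℂ) :=
  TopologicalSpace.generateFrom
    {U | ∃ p : MvPolynomial ι ℂ, U = {w | MvPolynomial.eval w p ≠ 0}}

variable {Q : Quiv}

/-- The Zariski topology on `rep(Q,β)`. -/
def zarTop (β : Q.V → ℕ) : TopologicalSpace (QRep Q β) :=
  TopologicalSpace.induced (repCoords (β := β)) (zarPi _)

/-- Zariski closure in `rep(Q,β)`. -/
def zclosure {β : Q.V → ℕ} (s : Set (QRep Q β)) : Set (QRep Q β) :=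
  @closure _ (zarTop β) s

/-- Zariski-open. -/
def zIsOpen {β : Q.V → ℕ} (s : Set (QRep Q β)) : Prop := @IsOpen _ (zarTop β) s

/-- Zariski-closed. -/
def zIsClosed {β : Q.V → ℕ} (s : Set (QRep Q β)) : Prop := @IsClosed _ (zarTop β) s

/-- Irreducibility in the Zariski topology. -/
def zIrred {β : Q.V → ℕ} (s : Set (QRep Q β)) : Prop := @IsIrreducible _ (zarTop β) s

/-- Dimension of a subset of `rep(Q,β)`: the topological Krull dimension in the
(subspace) Zariski topology. -/
def zdim {β : Q.V → ℕ} (s : Set (QRep Q β)) : WithBot ℕ∞ :=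
  @topologicalKrullDim s (TopologicalSpace.induced Subtype.val (zarTop β))

/-- `C(α)`: the closure of `P_A(α)`. -/
def Cset (S : Set (FormalRel Q)) (α : Q.V → ℕ) : Set (QRep Q α) := zclosure (PAset S α)

/-- `C` is an irreducible component of `M` (for `M` closed in `rep(Q,α)`): a maximal
irreducible closed subset of `M`. -/
def IsIrrCompOf {β : Q.V → ℕ} (C M : Set (QRep Q β)) : Prop :=
  zIrred C ∧ zIsClosed C ∧ C ⊆ M ∧
    ∀ C' : Set (QRep Q β), zIrred C' → zIsClosed C' → C' ⊆ M → C ⊆ C' → C' = C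

/-- `V` is an indecomposable representation: it is nonzero and its endomorphism algebra
has no idempotents other than `0` and `1`. -/
def IsIndecRep {α : Q.V → ℕ} (V : QRep Q α) : Prop :=
  (∃ x, α x ≠ 0) ∧
  ∀ φ ∈ HomS V V, (∀ x, φ x * φ x = φ x) → φ = 0 ∨ φ = fun x => (1 : Matrix _ _ ℂ)

/-- `C` is an indecomposable irreducible component of `M`: an irreducible component
containing a dense open subset of indecomposable representations. -/
def IsIndecComp {β : Q.V → ℕ} (C M : Set (QRep Q β)) : Prop :=
  IsIrrCompOf C M ∧
  ∃ U : Set (QRep Q β), zIsOpen U ∧ C ⊆ zclosure (C ∩ U) ∧ ∀ V ∈ C ∩ U, IsIndecRep V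

/-- The `GL(α)`-orbit of `V`. -/
def orbitOf {α : Q.V → ℕ} (V : QRep Q α) : Set (QRep Q α) := {W | ∃ g : GLb α, gAct g V = W}

/-- `C` is an orbit closure `closure(GL(α)·V)` of some module `V ∈ mod(A,α)`. -/
def IsOrbitClosure (S : Set (FormalRel Q)) {α : Q.V → ℕ} (C : Set (QRep Q α)) : Prop :=
  ∃ V ∈ modSet S α, C = zclosure (orbitOf V)

/-- The coordinates on `∏_x ℂ^{α(x) × α(x)}`, the ambient space of `GL(α)`. -/
def glCoords {α : Q.V → ℕ} (g : ∀ x : Q.V, Matrix (Fin (α x)) (Fin (α x)) ℂ) :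
    (Σ x : Q.V, Fin (α x) × Fin (α x)) → ℂ := fun c => g c.1 c.2.1 c.2.2

/-- The Zariski topology on `∏_x ℂ^{α(x) × α(x)}`. -/
def glTop (Q : Quiv) (α : Q.V → ℕ) :
    TopologicalSpace (∀ x : Q.V, Matrix (Fin (α x)) (Fin (α x)) ℂ) :=
  TopologicalSpace.induced glCoords (zarPi _)

/-- `GL(α)` as a (quasi-affine) subset of `∏_x ℂ^{α(x) × α(x)}`. -/
def glSet (Q : Quiv) (α : Q.V → ℕ) : Set (∀ x : Q.V, Matrix (Fin (α x)) (Fin (α x)) ℂ) :=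
  {g | ∀ x, IsUnit (g x)}

/-- The dimension of the group variety `GL(α)`. -/
def glDim (Q : Quiv) (α : Q.V → ℕ) : WithBot ℕ∞ :=
  @topologicalKrullDim (glSet Q α) (TopologicalSpace.induced Subtype.val (glTop Q α))

end Zariski
section Sums

variable {Q : Quiv}

/-- `W` is a direct sum of the representations `V i` (up to isomorphism of the underlying
block-diagonal structure). -/
def IsSumOf {ι : Type} [Fintype ι] [DecidableEq ι] {αs : ι → Q.V → ℕ} {δ : Q.V → ℕ}
    (W : QRep Q δ) (V : ∀ i, QRep Q (αs i)) : Prop :=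
  ∃ u : ∀ x : Q.V, ((Fin (δ x) → ℂ) ≃ₗ[ℂ] ((Σ i, Fin (αs i x)) → ℂ)),
    ∀ a : Q.A, (u (Q.h a)).toLinearMap ∘ₗ (W a).mulVecLin =
      (Matrix.blockDiagonal' (fun i => V i a)).mulVecLin ∘ₗ (u (Q.t a)).toLinearMap

/-- The constructible subset `C₁ ⊕ ⋯ ⊕ C_l ⊆ rep(Q,δ)`: representations isomorphic to a
direct sum `V₁ ⊕ ⋯ ⊕ V_l` with `V_i ∈ C_i`. -/
def sumSet {ι : Type} [Fintype ι] [DecidableEq ι] (αs : ι → Q.V → ℕ)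
    (Cs : ∀ i, Set (QRep Q (αs i))) (δ : Q.V → ℕ) : Set (QRep Q δ) :=
  {W | ∃ V : ∀ i, QRep Q (αs i), (∀ i, V i ∈ Cs i) ∧ IsSumOf W V}

/-- The generic `Ext¹` between two subsets:
`ext¹(C,D) = min {dim Ext¹(X,Y) : (X,Y) ∈ C × D}`. -/
def genExt1 (S : Set (FormalRel Q)) {α α' : Q.V → ℕ}
    (C : Set (QRep Q α)) (D : Set (QRep Q α')) : ℕ :=
  sInf {n : ℕ | ∃ X ∈ C, ∃ Y ∈ D, n = dimExt1 S X Y}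

end Sums

section ExtHigher

variable {Q : Quiv}

/-- A representation of `Q` packaged with its dimension vector. -/
def PRp (Q : Quiv) := Σ γ : Q.V → ℕ, QRep Q γ

instance : Inhabited (PRp Q) := ⟨⟨fun _ => 0, fun _ => 0⟩⟩

/-- `K` is a (first) syzygy of `M` over `ℂQ/⟨S⟩`: there is a short exact sequence
`0 → K → P → M → 0` with `P` a projective module. -/
def IsSyzOf (S : Set (FormalRel Q)) (K M : PRp Q) : Prop :=
  K.2 ∈ modSet S K.1 ∧ ∃ (γP : Q.V → ℕ) (P : QRep Q γP), P ∈ modSet S γP ∧ IsProjRep S P ∧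
    ∃ i ∈ HomS K.2 P, ∃ p ∈ HomS P M.2, MorInj i ∧ MorSurj p ∧
      ∀ x, LinearMap.range (Matrix.mulVecLin (i x)) = LinearMap.ker (Matrix.mulVecLin (p x))

/-- A chosen syzygy of `M` over `ℂQ/⟨S⟩`. -/
def syz (S : Set (FormalRel Q)) (M : PRp Q) : PRp Q :=
  Classical.epsilon (fun K => IsSyzOf S K M)

/-- `dim_ℂ Ext^l (M,N)` over `ℂQ/⟨S⟩`, via dimension shifting along syzygies:
`Ext⁰ = Hom`, `Ext¹` is computed by cochains, and `Ext^{l+2}(M,N) = Ext^{l+1}(ΩM,N)`. -/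
def dimExtN (S : Set (FormalRel Q)) : ℕ → PRp Q → PRp Q → ℕ
  | 0, M, N => dimHom M.2 N.2
  | 1, M, N => dimExt1 S M.2 N.2
  | (l+2), M, N => dimExtN S (l+1) (syz S M) N

/-- The simple representation `S_x` concentrated at the vertex `x`. -/
def simplePR (Q : Quiv) (x0 : Q.V) : PRp Q :=
  ⟨fun z => if z = x0 then 1 else 0, fun _ => 0⟩

/-- The Euler form pairing `⟨α, dim S_y⟩_B` of the algebra `B = ℂQ/⟨S⟩`:
`Σ_{l ≥ 0} (−1)^l Σ_x dim Ext^l_B(S_x,S_y) · α(x)`.  The weight `⟨α,−⟩_B` is the function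
`y ↦ eulerPair S α y`. -/
def eulerPair (S : Set (FormalRel Q)) (α : Q.V → ℕ) (y : Q.V) : ℤ :=
  ∑ᶠ l : ℕ, (-1 : ℤ)^l *
    ∑ x : Q.V, (α x : ℤ) * (dimExtN S l (simplePR Q x) (simplePR Q y) : ℤ)

/-- The set of relations annihilating `W`: the annihilator `Ann_{ℂQ}(W)`, so that
`B = ℂQ/Ann_{ℂQ}(W)`. -/
def annRel {β : Q.V → ℕ} (W : QRep Q β) : Set (FormalRel Q) :=
  {r | evalLin W r.2.2 = 0}

/-- The weight semigroup `L_W` of `W`: weights `σ` with `σ|_{supp β} = ⟨α,−⟩_B` for some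
dimension vector `α ∈ ℕ^{supp β}` with `P_B(α) ≠ ∅`, where `B = ℂQ/Ann_{ℂQ}(W)`. -/
def weightSgrp {β : Q.V → ℕ} (W : QRep Q β) : Set (Q.V → ℤ) :=
  {σ | ∃ α : Q.V → ℕ, (∀ x, β x = 0 → α x = 0) ∧ (PAset (annRel W) α).Nonempty ∧
    ∀ y, β y ≠ 0 → σ y = eulerPair (annRel W) α y}

end ExtHigher

section Tame

variable {Q : Quiv}

/-- Specialization of a representation over `ℂ[x]` at `λ ∈ ℂ`, i.e.
`M ⊗_{ℂ[x]} ℂ[x]/(x−λ)`. -/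
def polyEvalAt {γ : Q.V → ℕ} (M : RepR Q (Polynomial ℂ) γ) (lam : ℂ) : QRep Q γ :=
  fun a => (M a).map (fun p => Polynomial.eval lam p)

/-- The algebra `A = ℂQ/⟨S⟩` is tame: for every dimension `d` there are finitely many
`A`–`ℂ[x]`-bimodules `M₁,…,M_s`, free of finite rank over `ℂ[x]` (i.e. matrix
representations over `ℂ[x]` satisfying the relations), such that all but finitely many
isomorphism classes of `d`-dimensional indecomposable `A`-modules are of the form
`M_i ⊗_{ℂ[x]} ℂ[x]/(x−λ)`. -/
def IsTame (S : Set (FormalRel Q)) : Prop :=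
  ∀ d : ℕ, ∃ (s : ℕ) (γs : Fin s → (Q.V → ℕ)) (M : ∀ i, RepR Q (Polynomial ℂ) (γs i)),
    (∀ i, ∀ r ∈ S, evalLinP (M i) r.2.2 = 0) ∧
    ∃ (t : ℕ) (βs : Fin t → (Q.V → ℕ)) (E : ∀ k, QRep Q (βs k)),
      ∀ (α : Q.V → ℕ) (V : QRep Q α), V ∈ modSet S α → (∑ x, α x) = d → IsIndecRep V →
        (∃ k, RIso (E k) V) ∨ (∃ i lam, RIso (polyEvalAt (M i) lam) V)

end Tame

section Stability

variable {Q : Quiv}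

/-- `U` is a subrepresentation of `V` (a family of subspaces preserved by the structure
maps). -/
def SubRep {α : Q.V → ℕ} (V : QRep Q α) (U : ∀ x : Q.V, Submodule ℂ (Fin (α x) → ℂ)) : Prop :=
  ∀ a : Q.A, (U (Q.t a)).map (Matrix.mulVecLin (V a)) ≤ U (Q.h a)

/-- `V` is `θ`-stable: `V ≠ 0`, `θ · dim V = 0`, and `θ · dim V' < 0` for every proper
nonzero subrepresentation `V'` of `V`. -/
def ThetaStable {α : Q.V → ℕ} (θ : Q.V → ℤ) (V : QRep Q α) : Prop :=
  (∃ x, α x ≠ 0) ∧ (∑ x, θ x * (α x : ℤ)) = 0 ∧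
  ∀ U : ∀ x : Q.V, Submodule ℂ (Fin (α x) → ℂ), SubRep V U →
    (∃ x, U x ≠ ⊥) → (∃ x, U x ≠ ⊤) →
      (∑ x, θ x * (Module.finrank ℂ (U x) : ℤ)) < 0

/-- The morphism with components `f` from `P` is essential onto its image: any
subrepresentation of `P` mapping onto the image of `f` is all of `P`. -/
def IsEssentialTo {γ δ : Q.V → ℕ} (P : QRep Q γ)
    (f : ∀ x : Q.V, Matrix (Fin (δ x)) (Fin (γ x)) ℂ) : Prop :=
  ∀ U : ∀ x : Q.V, Submodule ℂ (Fin (γ x) → ℂ), SubRep P U →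
    (∀ x, (U x).map (Matrix.mulVecLin (f x)) = LinearMap.range (Matrix.mulVecLin (f x))) →
      ∀ x, U x = ⊤

end Stability

section Ideal

variable {Q : Quiv}

/-- The `(x,y)`-component of the two-sided ideal `⟨S⟩` of `ℂQ` generated by the
relations in `S`: the span of the translates `q·r·p` of relations `r ∈ S` by paths. -/
def idealComp (S : Set (FormalRel Q)) (x y : Q.V) : Submodule ℂ (Quiver.Path x y →₀ ℂ) :=
  Submodule.span ℂ {c | ∃ r ∈ S, ∃ (p : Quiver.Path x r.1) (q : Quiver.Path r.2.1 y),
    c = Finsupp.mapDomain (fun s => (p.comp s).comp q) r.2.2}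

/-- `W` is a faithful module over `A = ℂQ/⟨S⟩`: every element of `ℂQ` annihilating `W`
lies in the ideal `⟨S⟩`. -/
def FaithfulOver (S : Set (FormalRel Q)) {β : Q.V → ℕ} (W : QRep Q β) : Prop :=
  ∀ (x y : Q.V) (c : Quiver.Path x y →₀ ℂ), evalLin W c = 0 → c ∈ idealComp S x y

end Ideal
section Precomp

variable {Q : Quiv}

/-- Precomposition with a morphism `f : L → M` of representations, as a linear map
`Hom(M,N) → Hom(L,N)`, `φ ↦ φ ∘ f`. -/
def precompMap {γ₁ γ₀ δ : Q.V → ℕ} (L : QRep Q γ₁) (M : QRep Q γ₀) (N : QRep Q δ)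
    (f : ∀ x : Q.V, Matrix (Fin (γ₀ x)) (Fin (γ₁ x)) ℂ) (hf : f ∈ HomS L M) :
    (HomS M N) →ₗ[ℂ] (HomS L N) where
  toFun φ := ⟨fun x => φ.1 x * f x, by
    intro a
    have h1 : φ.1 (Q.h a) * M a = N a * φ.1 (Q.t a) := φ.2 a
    have h2 : f (Q.h a) * L a = M a * f (Q.t a) := hf a
    calc (φ.1 (Q.h a) * f (Q.h a)) * L a
        = φ.1 (Q.h a) * (f (Q.h a) * L a) := by rw [Matrix.mul_assoc]
      _ = φ.1 (Q.h a) * (M a * f (Q.t a)) := by rw [h2]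
      _ = (φ.1 (Q.h a) * M a) * f (Q.t a) := by rw [Matrix.mul_assoc]
      _ = (N a * φ.1 (Q.t a)) * f (Q.t a) := by rw [h1]
      _ = N a * (φ.1 (Q.t a) * f (Q.t a)) := by rw [Matrix.mul_assoc]⟩
  map_add' φ ψ := by
    apply Subtype.ext
    funext x
    simp [Matrix.add_mul]
  map_smul' c φ := by
    apply Subtype.ext
    funext x
    simp [Matrix.smul_mul]

end Precomp

section BipartiteQsig

variable (Q : Quiv) (β : Q.V → ℕ) (σ : Q.V → ℤ)

/-- The bipartite quiver `Q^σ`: its vertices are the vertices of `Q` where `σ` is positive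
together with those where `σ` is negative, and it has one arrow `a_p : v_i → w_j` for every
oriented path `p` in `Q` from `v_i` to `w_j`. -/
def Qsig : Quiv where
  V := PosV Q σ ⊕ NegV Q σ
  A := Σ (i : PosV Q σ) (j : NegV Q σ), Quiver.Path i.1 j.1
  t := fun a => Sum.inl a.1
  h := fun a => Sum.inr a.2.1
  fV := inferInstance
  dV := inferInstance

/-- The dimension vector `β` restricted to `Q^σ`. -/
def betaSig : (Qsig Q σ).V → ℕ := Sum.elim (fun i => β i.1) (fun j => β j.1)

/-- The weight `σ` restricted to `Q^σ`. -/
def sigSig : (Qsig Q σ).V → ℤ := Sum.elim (fun i => σ i.1) (fun j => σ j.1)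

/-- The morphism `φ : rep(Q,β) → rep(Q^σ,β)` given by `φ(W)(a_p) = W(p)`. -/
def phiSig (W : QRep Q β) : QRep (Qsig Q σ) (betaSig Q β σ) :=
  fun a => evalPath W a.2.2

end BipartiteQsig

/-!
Since `W` is faithful, the free module `⊕_x (A e_x)^{κ x}` embeds into a power of `W`: realize
`e_y A e_x` as the span of the matrices `W(p)` of paths `p : x → y`, and separate its elements
by their columns. A projective module is a direct summand of a free one, so morphisms
`P₁ → W` separate the vectors of `P₁`. Surjectivity of `φ ↦ φ ∘ d₀` makes every such morphism
factor through `d₀`, so it kills the image of `d₁`. Hence `d₁ = 0`, exactness makes `d₀`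
injective, and `0 → P₁ → P₀ → V → 0` is a projective resolution.
-/

lemma Matrix.mul_eq_zero_of_range_le_ker {R : Type*} [CommRing R] {l m n : Type*} [Fintype m]
    [Fintype n] {A : Matrix l m R} {B : Matrix m n R}
    (h : LinearMap.range B.mulVecLin ≤ LinearMap.ker A.mulVecLin) : A * B = 0 :=
  Matrix.ext_iff_mulVec.2 fun v => by
    rw [← Matrix.mulVec_mulVec, Matrix.zero_mulVec]
    exact h (LinearMap.mem_range_self _ v)

section PathAlgebra

variable {Q : Quiv}

def arrowHom (a : Q.A) : Q.t a ⟶ Q.h a := ⟨a, rfl, rfl⟩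

lemma evalPath_cons_arrowHom {R : Type} [CommRing R] {β : Q.V → ℕ} (W : RepR Q R β) (a : Q.A)
    {x : Q.V} (p : Quiver.Path x (Q.t a)) :
    evalPath W (p.cons (arrowHom a)) = W a * evalPath W p := by
  simp [arrowHom, evalPath, castM]

lemma evalPath_toPath_arrowHom {R : Type} [CommRing R] {β : Q.V → ℕ} (W : RepR Q R β)
    (a : Q.A) : evalPath W (arrowHom a).toPath = W a := by
  rw [Quiver.Hom.toPath, evalPath_cons_arrowHom, evalPath, Matrix.mul_one]

lemma evalPath_comp {R : Type} [CommRing R] {β : Q.V → ℕ} (W : RepR Q R β) {x y z : Q.V}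
    (p : Quiver.Path x y) (q : Quiver.Path y z) :
    evalPath W (p.comp q) = evalPath W q * evalPath W p := by
  induction q with
  | nil => rw [Quiver.Path.comp_nil, evalPath, Matrix.one_mul]
  | cons q e ih =>
    obtain ⟨a, rfl, rfl⟩ := e
    rw [Quiver.Path.comp_cons]
    erw [evalPath_cons_arrowHom, evalPath_cons_arrowHom]
    rw [ih, Matrix.mul_assoc]

variable {β : Q.V → ℕ}

def evalLinₗ (W : QRep Q β) (x y : Q.V) :
    (Quiver.Path x y →₀ ℂ) →ₗ[ℂ] Matrix (Fin (β y)) (Fin (β x)) ℂ :=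
  Finsupp.linearCombination ℂ (evalPath W)

lemma evalLinₗ_apply (W : QRep Q β) {x y : Q.V} (c : Quiver.Path x y →₀ ℂ) :
    evalLinₗ W x y c = evalLin W c :=
  rfl

lemma evalLinₗ_single (W : QRep Q β) {x y : Q.V} (p : Quiver.Path x y) :
    evalLinₗ W x y (Finsupp.single p 1) = evalPath W p := by
  rw [evalLinₗ, Finsupp.linearCombination_single, one_smul]

lemma evalLinₗ_mapDomain (W : QRep Q β) {x y x' y' : Q.V}
    (f : Quiver.Path x y → Quiver.Path x' y') (A : Matrix (Fin (β y')) (Fin (β y)) ℂ)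
    (B : Matrix (Fin (β x)) (Fin (β x')) ℂ) (hf : ∀ s, evalPath W (f s) = A * evalPath W s * B)
    (c : Quiver.Path x y →₀ ℂ) :
    evalLinₗ W x' y' (c.mapDomain f) = A * evalLinₗ W x y c * B := by
  have hcomp : evalPath W ∘ f =
      (mulRightLinearMap _ ℂ B ∘ₗ mulLeftLinearMap _ ℂ A) ∘ evalPath W :=
    funext fun s => by simp [hf]
  rw [evalLinₗ, evalLinₗ, Finsupp.linearCombination_mapDomain, hcomp,
    ← Finsupp.apply_linearCombination]
  rfl

lemma evalLinₗ_eq_zero_of_mem_idealComp {S : Set (FormalRel Q)} {M : QRep Q β}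
    (hM : M ∈ modSet S β) {x y : Q.V} {c : Quiver.Path x y →₀ ℂ} (hc : c ∈ idealComp S x y) :
    evalLinₗ M x y c = 0 := by
  refine LinearMap.mem_ker.1 (Submodule.span_le.2 ?_ hc)
  rintro _ ⟨r, hr, p, q, rfl⟩
  rw [SetLike.mem_coe, LinearMap.mem_ker, evalLinₗ_mapDomain M _ (evalPath M q) (evalPath M p)
    (fun s => by rw [evalPath_comp, evalPath_comp, Matrix.mul_assoc]), evalLinₗ_apply, hM r hr,
    Matrix.mul_zero, Matrix.zero_mul]

lemma FaithfulOver.ker_evalLinₗ_le {S : Set (FormalRel Q)} {βW : Q.V → ℕ} {W : QRep Q βW}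
    (hW : FaithfulOver S W) {M : QRep Q β} (hM : M ∈ modSet S β) (x y : Q.V) :
    LinearMap.ker (evalLinₗ W x y) ≤ LinearMap.ker (evalLinₗ M x y) :=
  fun _ hc => evalLinₗ_eq_zero_of_mem_idealComp hM (hW x y _ hc)

end PathAlgebra

section Morphisms

variable {Q : Quiv} {α β γ : Q.V → ℕ}

lemma one_mem_HomS (V : QRep Q α) :
    (fun x => (1 : Matrix (Fin (α x)) (Fin (α x)) ℂ)) ∈ HomS V V :=
  fun a => by rw [Matrix.one_mul, Matrix.mul_one]

lemma mul_mem_HomS {U : QRep Q α} {V : QRep Q β} {W : QRep Q γ}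
    {φ : ∀ x, Matrix (Fin (γ x)) (Fin (β x)) ℂ} {ψ : ∀ x, Matrix (Fin (β x)) (Fin (α x)) ℂ}
    (hφ : φ ∈ HomS V W) (hψ : ψ ∈ HomS U V) : (fun x => φ x * ψ x) ∈ HomS U W := fun a => by
  rw [Matrix.mul_assoc, hψ a, ← Matrix.mul_assoc, hφ a, Matrix.mul_assoc]

lemma mul_evalPath_of_mem_HomS {V : QRep Q α} {W : QRep Q β}
    {φ : ∀ x, Matrix (Fin (β x)) (Fin (α x)) ℂ} (hφ : φ ∈ HomS V W) {x y : Q.V}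
    (p : Quiver.Path x y) : φ y * evalPath V p = evalPath W p * φ x := by
  induction p with
  | nil => rw [evalPath, evalPath, Matrix.mul_one, Matrix.one_mul]
  | cons p e ih =>
    obtain ⟨a, rfl, rfl⟩ := e
    erw [evalPath_cons_arrowHom, evalPath_cons_arrowHom]
    rw [← Matrix.mul_assoc, hφ a, Matrix.mul_assoc, ih, Matrix.mul_assoc]

lemma mul_evalLinₗ_of_mem_HomS {V : QRep Q α} {W : QRep Q β}
    {φ : ∀ x, Matrix (Fin (β x)) (Fin (α x)) ℂ} (hφ : φ ∈ HomS V W) {x y : Q.V}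
    (c : Quiver.Path x y →₀ ℂ) : φ y * evalLinₗ V x y c = evalLinₗ W x y c * φ x := by
  have hcomp : mulLeftLinearMap _ ℂ (φ y) ∘ evalPath V =
      mulRightLinearMap _ ℂ (φ x) ∘ evalPath W :=
    funext fun p => mul_evalPath_of_mem_HomS hφ p
  change mulLeftLinearMap _ ℂ (φ y) (evalLinₗ V x y c) =
    mulRightLinearMap _ ℂ (φ x) (evalLinₗ W x y c)
  rw [evalLinₗ, evalLinₗ, Finsupp.apply_linearCombination, Finsupp.apply_linearCombination,
    hcomp]

lemma mem_modSet_of_separating {S : Set (FormalRel Q)} {ι : Type} {F : QRep Q α}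
    {W : QRep Q β} (hW : W ∈ modSet S β) (ψ : ι → ∀ x, Matrix (Fin (β x)) (Fin (α x)) ℂ)
    (hψ : ∀ i, ψ i ∈ HomS F W) (hsep : ∀ y v, (∀ i, ψ i y *ᵥ v = 0) → v = 0) :
    F ∈ modSet S α := fun r hr => by
  refine Matrix.ext_iff_mulVec.2 fun v => ?_
  rw [Matrix.zero_mulVec]
  refine hsep _ _ fun i => ?_
  rw [Matrix.mulVec_mulVec, ← evalLinₗ_apply, mul_evalLinₗ_of_mem_HomS (hψ i), evalLinₗ_apply,
    hW r hr, Matrix.zero_mul, Matrix.zero_mulVec]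

lemma mul_eq_zero_of_precompMap_surjective {γ₂ γ₁ γ₀ δ : Q.V → ℕ}
    {L : QRep Q γ₁} {M : QRep Q γ₀} {N : QRep Q δ}
    {f : ∀ x, Matrix (Fin (γ₀ x)) (Fin (γ₁ x)) ℂ} (hf : f ∈ HomS L M)
    (hsurj : Function.Surjective (precompMap L M N f hf))
    {g : ∀ x, Matrix (Fin (γ₁ x)) (Fin (γ₂ x)) ℂ} (hfg : ∀ x, f x * g x = 0)
    {ψ : ∀ x, Matrix (Fin (δ x)) (Fin (γ₁ x)) ℂ} (hψ : ψ ∈ HomS L N) (x : Q.V) :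
    ψ x * g x = 0 := by
  obtain ⟨φ, hφ⟩ := hsurj ⟨ψ, hψ⟩
  have hφx : φ.1 x * f x = ψ x := congrFun (congrArg Subtype.val hφ) x
  rw [← hφx, Matrix.mul_assoc, hfg, Matrix.mul_zero]

end Morphisms

section PathSpan

variable {Q : Quiv} {βW β : Q.V → ℕ}

/-- The image of `e_y ℂQ e_x` in `Hom(W x, W y)`: a copy of `e_y A e_x` when `W` is a
faithful `A`-module. -/
abbrev pathSpan (W : QRep Q βW) (x y : Q.V) :
    Submodule ℂ (Matrix (Fin (βW y)) (Fin (βW x)) ℂ) :=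
  LinearMap.range (evalLinₗ W x y)

lemma one_mem_pathSpan (W : QRep Q βW) (x : Q.V) : 1 ∈ pathSpan W x x :=
  ⟨Finsupp.single Quiver.Path.nil 1, by rw [evalLinₗ_single, evalPath]⟩

lemma mul_mem_pathSpan (W : QRep Q βW) (a : Q.A) {x : Q.V}
    {m : Matrix (Fin (βW (Q.t a))) (Fin (βW x)) ℂ} (hm : m ∈ pathSpan W x (Q.t a)) :
    W a * m ∈ pathSpan W x (Q.h a) := by
  obtain ⟨c, rfl⟩ := hm
  refine ⟨c.mapDomain (·.comp (arrowHom a).toPath), ?_⟩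
  rw [evalLinₗ_mapDomain W _ (W a) 1 fun s => by rw [evalPath_comp, evalPath_toPath_arrowHom,
    Matrix.mul_one], Matrix.mul_one]

/-- The action of `e_y A e_x` on a module `M`, read off from its faithful copy in `W`. -/
def pathSpanLift (W : QRep Q βW) (M : QRep Q β) {x y : Q.V}
    (hker : LinearMap.ker (evalLinₗ W x y) ≤ LinearMap.ker (evalLinₗ M x y)) :
    pathSpan W x y →ₗ[ℂ] Matrix (Fin (β y)) (Fin (β x)) ℂ :=
  (LinearMap.ker _).liftQ (evalLinₗ M x y) hker ∘ₗ
    (evalLinₗ W x y).quotKerEquivRange.symm.toLinearMap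

lemma pathSpanLift_apply (W : QRep Q βW) (M : QRep Q β) {x y : Q.V}
    (hker : LinearMap.ker (evalLinₗ W x y) ≤ LinearMap.ker (evalLinₗ M x y))
    {m : pathSpan W x y} {c : Quiver.Path x y →₀ ℂ} (hc : evalLinₗ W x y c = m) :
    pathSpanLift W M hker m = evalLinₗ M x y c := by
  obtain rfl : m = ⟨_, LinearMap.mem_range_self _ c⟩ := Subtype.ext hc.symm
  rw [pathSpanLift, LinearMap.comp_apply, LinearEquiv.coe_coe,
    LinearMap.quotKerEquivRange_symm_apply_image]
  rfl

lemma pathSpanLift_one (W : QRep Q βW) (M : QRep Q β) {x : Q.V}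
    (hker : LinearMap.ker (evalLinₗ W x x) ≤ LinearMap.ker (evalLinₗ M x x)) :
    pathSpanLift W M hker ⟨1, one_mem_pathSpan W x⟩ = 1 := by
  rw [pathSpanLift_apply W M hker (c := Finsupp.single Quiver.Path.nil 1)
    (by rw [evalLinₗ_single, evalPath]), evalLinₗ_single, evalPath]

lemma pathSpanLift_mul (W : QRep Q βW) (M : QRep Q β) (a : Q.A) {x : Q.V}
    (hkert : LinearMap.ker (evalLinₗ W x (Q.t a)) ≤ LinearMap.ker (evalLinₗ M x (Q.t a)))
    (hkerh : LinearMap.ker (evalLinₗ W x (Q.h a)) ≤ LinearMap.ker (evalLinₗ M x (Q.h a)))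
    (m : pathSpan W x (Q.t a)) :
    pathSpanLift W M hkerh ⟨W a * (m : Matrix _ _ ℂ), mul_mem_pathSpan W a m.2⟩ =
      M a * pathSpanLift W M hkert m := by
  obtain ⟨c, hc⟩ := m.2
  have hcomp {δ : Q.V → ℕ} (N : QRep Q δ) :
      evalLinₗ N x (Q.h a) (c.mapDomain (·.comp (arrowHom a).toPath)) =
        N a * evalLinₗ N x (Q.t a) c := by
    rw [evalLinₗ_mapDomain N _ (N a) 1 fun s => by rw [evalPath_comp,
      evalPath_toPath_arrowHom, Matrix.mul_one], Matrix.mul_one]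
  rw [pathSpanLift_apply W M hkert hc, pathSpanLift_apply W M hkerh (by rw [hcomp W, hc]),
    hcomp M]

end PathSpan

section Realize

variable {Q : Quiv} {M : Q.V → Type} [∀ y, AddCommGroup (M y)] [∀ y, Module ℂ (M y)]
  [∀ y, FiniteDimensional ℂ (M y)] {δ : Q.V → ℕ}

variable (M) in
def coordEquiv (y : Q.V) : M y ≃ₗ[ℂ] (Fin (Module.finrank ℂ (M y)) → ℂ) :=
  (Module.finBasis ℂ (M y)).equivFun

def realize (ρ : ∀ a : Q.A, M (Q.t a) →ₗ[ℂ] M (Q.h a)) :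
    QRep Q (fun y => Module.finrank ℂ (M y)) := fun a =>
  LinearMap.toMatrix' ((coordEquiv M (Q.h a)).toLinearMap ∘ₗ ρ a ∘ₗ
    (coordEquiv M (Q.t a)).symm.toLinearMap)

def realizeMap (f : ∀ y, M y →ₗ[ℂ] (Fin (δ y) → ℂ)) (y : Q.V) :
    Matrix (Fin (δ y)) (Fin (Module.finrank ℂ (M y))) ℂ :=
  LinearMap.toMatrix' (f y ∘ₗ (coordEquiv M y).symm.toLinearMap)

lemma realize_mulVec (ρ : ∀ a : Q.A, M (Q.t a) →ₗ[ℂ] M (Q.h a)) (a : Q.A)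
    (v : Fin (Module.finrank ℂ (M (Q.t a))) → ℂ) :
    realize ρ a *ᵥ v = coordEquiv M (Q.h a) (ρ a ((coordEquiv M (Q.t a)).symm v)) :=
  LinearMap.toMatrix'_mulVec _ _

lemma realizeMap_mulVec (f : ∀ y, M y →ₗ[ℂ] (Fin (δ y) → ℂ)) (y : Q.V)
    (v : Fin (Module.finrank ℂ (M y)) → ℂ) :
    realizeMap f y *ᵥ v = f y ((coordEquiv M y).symm v) :=
  LinearMap.toMatrix'_mulVec _ _

lemma realizeMap_mem_HomS (ρ : ∀ a : Q.A, M (Q.t a) →ₗ[ℂ] M (Q.h a)) {N : QRep Q δ}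
    (f : ∀ y, M y →ₗ[ℂ] (Fin (δ y) → ℂ))
    (hf : ∀ a m, f (Q.h a) (ρ a m) = N a *ᵥ f (Q.t a) m) :
    realizeMap f ∈ HomS (realize ρ) N := fun a =>
  Matrix.ext_iff_mulVec.2 fun v => by
    rw [← Matrix.mulVec_mulVec, ← Matrix.mulVec_mulVec, realize_mulVec, realizeMap_mulVec,
      realizeMap_mulVec, LinearEquiv.symm_apply_apply, hf]

lemma realizeMap_morSurj {f : ∀ y, M y →ₗ[ℂ] (Fin (δ y) → ℂ)}
    (hf : ∀ y, Function.Surjective (f y)) : MorSurj (realizeMap f) := fun y v => by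
  obtain ⟨m, rfl⟩ := hf y v
  exact ⟨coordEquiv M y m, by
    rw [Matrix.mulVecLin_apply, realizeMap_mulVec, LinearEquiv.symm_apply_apply]⟩

end Realize

section FreeModule

variable {Q : Quiv} {βW : Q.V → ℕ} (W : QRep Q βW) (κ : Q.V → ℕ)

/-- The free module `⊕_x (A e_x)^{κ x}` at the vertex `y`, with `e_y A e_x` realized as
`pathSpan W x y`. -/
abbrev FreeSpace (y : Q.V) : Type := ∀ i : Σ x, Fin (κ x), pathSpan W i.1 y

def freeAction (a : Q.A) : FreeSpace W κ (Q.t a) →ₗ[ℂ] FreeSpace W κ (Q.h a) :=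
  LinearMap.pi fun i =>
    ((mulLeftLinearMap _ ℂ (W a)).restrict fun _ hm => mul_mem_pathSpan W a hm) ∘ₗ
      LinearMap.proj i

def freeRep : QRep Q (fun y => Module.finrank ℂ (FreeSpace W κ y)) :=
  realize (freeAction W κ)

def freeCoord (j : Σ i : Σ x, Fin (κ x), Fin (βW i.1)) (y : Q.V) :
    FreeSpace W κ y →ₗ[ℂ] (Fin (βW y) → ℂ) :=
  (mulVecBilin ℂ ℂ).flip (Pi.single j.2 1) ∘ₗ (pathSpan W j.1.1 y).subtype ∘ₗ
    LinearMap.proj j.1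

lemma freeCoord_mem_HomS (j : Σ i : Σ x, Fin (κ x), Fin (βW i.1)) :
    realizeMap (freeCoord W κ j) ∈ HomS (freeRep W κ) W :=
  realizeMap_mem_HomS _ _ fun a _ => (Matrix.mulVec_mulVec (Pi.single j.2 1) (W a) _).symm

lemma freeCoord_separating (y : Q.V) (v : Fin (Module.finrank ℂ (FreeSpace W κ y)) → ℂ)
    (hv : ∀ j, realizeMap (freeCoord W κ j) y *ᵥ v = 0) : v = 0 := by
  suffices hm : (coordEquiv (FreeSpace W κ) y).symm v = 0 by
    simpa using congrArg (coordEquiv (FreeSpace W κ) y) hm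
  funext i
  refine Subtype.ext (Matrix.ext fun r c => ?_)
  have hcol := congrFun (hv ⟨i, c⟩) r
  rwa [realizeMap_mulVec, freeCoord, LinearMap.comp_apply, LinearMap.comp_apply,
    LinearMap.flip_apply, mulVecBilin_apply, mulVec_single_one] at hcol

lemma freeRep_mem_modSet {S : Set (FormalRel Q)} (hW : W ∈ modSet S βW) :
    freeRep W κ ∈ modSet S _ :=
  mem_modSet_of_separating hW _ (freeCoord_mem_HomS W κ) (freeCoord_separating W κ)

variable {W κ} {P : QRep Q κ}
  (hker : ∀ x y, LinearMap.ker (evalLinₗ W x y) ≤ LinearMap.ker (evalLinₗ P x y))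

def freeToRep (y : Q.V) : FreeSpace W κ y →ₗ[ℂ] (Fin (κ y) → ℂ) :=
  ∑ i : Σ x, Fin (κ x),
    (mulVecBilin ℂ ℂ).flip (Pi.single i.2 1) ∘ₗ pathSpanLift W P (hker i.1 y) ∘ₗ
      LinearMap.proj i

lemma freeToRep_apply (y : Q.V) (m : FreeSpace W κ y) :
    freeToRep hker y m = ∑ i, pathSpanLift W P (hker i.1 y) (m i) *ᵥ Pi.single i.2 1 := by
  simp [freeToRep]

lemma freeToRep_mem_HomS : realizeMap (freeToRep hker) ∈ HomS (freeRep W κ) P := by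
  refine realizeMap_mem_HomS _ _ fun a m => ?_
  simp only [freeToRep_apply, Matrix.mulVec_sum]
  refine Finset.sum_congr rfl fun i _ => ?_
  rw [Matrix.mulVec_mulVec, ← pathSpanLift_mul W P a (hker i.1 (Q.t a))]
  rfl

lemma freeToRep_surjective (y : Q.V) : Function.Surjective (freeToRep hker y) := by
  rw [← LinearMap.range_eq_top, eq_top_iff, ← (Pi.basisFun ℂ (Fin (κ y))).span_eq,
    Submodule.span_le]
  rintro _ ⟨k, rfl⟩
  refine ⟨Pi.single ⟨y, k⟩ ⟨1, one_mem_pathSpan W y⟩, ?_⟩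
  rw [freeToRep_apply, Finset.sum_eq_single ⟨y, k⟩, Pi.single_eq_same, pathSpanLift_one,
    Matrix.one_mulVec, Pi.basisFun_apply]
  · intro i _ hi
    rw [Pi.single_eq_of_ne hi, map_zero, Matrix.zero_mulVec]
  · exact fun h => absurd (Finset.mem_univ _) h

end FreeModule

section Projective

variable {Q : Quiv} {S : Set (FormalRel Q)} {γ δ : Q.V → ℕ}

lemma IsProjRep.exists_rightInverse {P : QRep Q γ} (hP : IsProjRep S P)
    (hPmod : P ∈ modSet S γ) {M : QRep Q δ} (hM : M ∈ modSet S δ)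
    {g : ∀ x, Matrix (Fin (γ x)) (Fin (δ x)) ℂ} (hg : g ∈ HomS M P) (hgsurj : MorSurj g) :
    ∃ h ∈ HomS P M, ∀ x, g x * h x = 1 :=
  hP δ γ M P hM hPmod g hg hgsurj _ (one_mem_HomS P)

theorem IsProjRep.eq_zero_of_forall_hom_faithful {βW : Q.V → ℕ} {W : QRep Q βW}
    (hW : W ∈ modSet S βW) (hfaith : FaithfulOver S W) {P : QRep Q γ} (hP : IsProjRep S P)
    (hPmod : P ∈ modSet S γ) {y : Q.V} {v : Fin (γ y) → ℂ}
    (hv : ∀ ψ ∈ HomS P W, ψ y *ᵥ v = 0) : v = 0 := by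
  have hker := hfaith.ker_evalLinₗ_le hPmod
  obtain ⟨h, hh, hgh⟩ := hP.exists_rightInverse hPmod (freeRep_mem_modSet W γ hW)
    (freeToRep_mem_HomS hker) (realizeMap_morSurj (freeToRep_surjective hker))
  have hhv : h y *ᵥ v = 0 := freeCoord_separating W γ y _ fun j => by
    rw [Matrix.mulVec_mulVec]
    exact hv _ (mul_mem_HomS (freeCoord_mem_HomS W γ j) hh)
  rw [← Matrix.one_mulVec v, ← hgh y, ← Matrix.mulVec_mulVec, hhv, Matrix.mulVec_zero]

end Projective

theorem statement8_general (Q : Quiv)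
    (R : Set (FormalRel Q))
    (βW βV : Q.V → ℕ) (W : QRep Q βW) (hW : W ∈ modSet R βW)
    (hfaith : FaithfulOver R W)
    (V : QRep Q βV)
    -- a projective resolution `⋯ → P₂ → P₁ → P₀ → V → 0` ...
    (γ : ℕ → (Q.V → ℕ)) (P : ∀ n, QRep Q (γ n))
    (hPmod : ∀ n, P n ∈ modSet R (γ n))
    (hPproj : ∀ n, IsProjRep R (P n))
    (d : ∀ n, ∀ x : Q.V, Matrix (Fin (γ n x)) (Fin (γ (n+1) x)) ℂ)
    (hd : ∀ n, d n ∈ HomS (P (n+1)) (P n))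
    (ε : ∀ x : Q.V, Matrix (Fin (βV x)) (Fin (γ 0 x)) ℂ)
    (hε : ε ∈ HomS (P 0) V)
    (hsurj : MorSurj ε)
    (hexact0 : ∀ x, LinearMap.range (Matrix.mulVecLin (d 0 x)) =
      LinearMap.ker (Matrix.mulVecLin (ε x)))
    (hexact : ∀ n x, LinearMap.range (Matrix.mulVecLin (d (n+1) x)) =
      LinearMap.ker (Matrix.mulVecLin (d n x)))
    -- hypothesis: `Hom(P₀,W) → Hom(P₁,W)`, `φ ↦ φ ∘ d₀`, is an isomorphism:
    (hiso : Function.Bijective (precompMap (P 1) (P 0) W (d 0) (hd 0))) :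
    PdimLE1 R V := by
  have hd1 : ∀ x, d 1 x = 0 := fun x => Matrix.ext_iff_mulVec.2 fun v => by
    rw [Matrix.zero_mulVec]
    refine (hPproj 1).eq_zero_of_forall_hom_faithful hW hfaith (hPmod 1) fun ψ hψ => ?_
    rw [Matrix.mulVec_mulVec, mul_eq_zero_of_precompMap_surjective (hd 0) hiso.2
      (fun y => Matrix.mul_eq_zero_of_range_le_ker (hexact 0 y).le) hψ x, Matrix.zero_mulVec]
  refine ⟨γ 0, γ 1, P 0, P 1, hPmod 0, hPmod 1, hPproj 0, hPproj 1, d 0, hd 0, ε, hε,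
    fun x => ?_, hsurj, hexact0⟩
  rw [← LinearMap.ker_eq_bot, ← hexact 0 x, hd1, Matrix.mulVecLin_zero, LinearMap.range_zero]

/-- Let `A = ℂQ/⟨R⟩` be a connected acyclic bound quiver algebra, `W` a
faithful `A`-module, and `V` an `A`-module with a minimal projective resolution
`⋯ → P₂ →^{d₁} P₁ →^{d₀} P₀ →^{ε} V → 0`.  If the induced map
`Hom_A(P₀,W) → Hom_A(P₁,W)`, `φ ↦ φ ∘ d₀`, is an isomorphism of vector spaces, then
`pdim_A V ≤ 1`. -/
theorem statement8 (Q : Quiv) [Fintype Q.A] (hconn : QConnected Q) (hacyc : QAcyclic Q)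
    (R : Set (FormalRel Q)) (hRfin : R.Finite) (hRadm : AdmissibleRels R)
    (βW βV : Q.V → ℕ) (W : QRep Q βW) (hW : W ∈ modSet R βW)
    (hfaith : FaithfulOver R W)
    (V : QRep Q βV) (hV : V ∈ modSet R βV)
    -- a projective resolution `⋯ → P₂ → P₁ → P₀ → V → 0` ...
    (γ : ℕ → (Q.V → ℕ)) (P : ∀ n, QRep Q (γ n))
    (hPmod : ∀ n, P n ∈ modSet R (γ n))
    (hPproj : ∀ n, IsProjRep R (P n))
    (d : ∀ n, ∀ x : Q.V, Matrix (Fin (γ n x)) (Fin (γ (n+1) x)) ℂ)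
    (hd : ∀ n, d n ∈ HomS (P (n+1)) (P n))
    (ε : ∀ x : Q.V, Matrix (Fin (βV x)) (Fin (γ 0 x)) ℂ)
    (hε : ε ∈ HomS (P 0) V)
    (hsurj : MorSurj ε)
    (hexact0 : ∀ x, LinearMap.range (Matrix.mulVecLin (d 0 x)) =
      LinearMap.ker (Matrix.mulVecLin (ε x)))
    (hexact : ∀ n x, LinearMap.range (Matrix.mulVecLin (d (n+1) x)) =
      LinearMap.ker (Matrix.mulVecLin (d n x)))
    -- ... which is minimal:
    (hmin0 : IsEssentialTo (P 0) ε)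
    (hminn : ∀ n, IsEssentialTo (P (n+1)) (d n))
    -- hypothesis: `Hom(P₀,W) → Hom(P₁,W)`, `φ ↦ φ ∘ d₀`, is an isomorphism:
    (hiso : Function.Bijective (precompMap (P 1) (P 0) W (d 0) (hd 0))) :
    PdimLE1 R V :=
  statement8_general Q R βW βV W hW hfaith V γ P hPmod hPproj d hd ε hε hsurj hexact0 hexact hiso
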